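/- Fix z ∈ ℝ and work on U = {(u,v) ∈ ℝ² : v ≠ 0} with the Poisson bracket {f,g} = v²·(∂f/∂u ∂g/∂v − ∂f/∂v ∂g/∂u) (the bracket of the symplectic form ω = du∧dv/v²). The smooth functions h_{z,1} = −1/v, h_{z,2} = −sinhc(2z/v)·u/v, h_{z,3} = −( sinhc²(2z/v)·u² + v² ) / ( sinhc(2z/v)·v ) satisfy {h_{z,1},h_{z,2}} = −sinhc(2z h_{z,1})·h_{z,1}, {h_{z,1},h_{z,3}} = −2 h_{z,2}, and {h_{z,2},h_{z,3}} = −cosh(2z h_{z,1})·h_{z,3}. -/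

import Mathlib

/-- The cardinal hyperbolic sine: `sinhc t = sinh t / t` for `t ≠ 0`, `sinhc 0 = 1`. -/
noncomputable def sinhc (t : ℝ) : ℝ := if t = 0 then 1 else Real.sinh t / t

/-- Canonical Poisson bracket on the plane (coordinates `(u,v)`):
`∂f/∂u ∂g/∂v − ∂f/∂v ∂g/∂u`. -/
noncomputable def pb (f g : ℝ × ℝ → ℝ) (p : ℝ × ℝ) : ℝ :=
  fderiv ℝ f p (1, 0) * fderiv ℝ g p (0, 1) - fderiv ℝ f p (0, 1) * fderiv ℝ g p (1, 0)

/-- Deformed complex-Riccati Hamiltonian `h_{z,1} = −1/v`. -/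
noncomputable def hCR1 : ℝ × ℝ → ℝ := fun q => -(1 / q.2)

/-- Deformed complex-Riccati Hamiltonian `h_{z,2} = −sinhc(2z/v)·u/v`. -/
noncomputable def hCR2 (z : ℝ) : ℝ × ℝ → ℝ := fun q => -(sinhc (2 * z / q.2) * q.1 / q.2)

/-- Deformed complex-Riccati Hamiltonian
`h_{z,3} = −(sinhc²(2z/v)u² + v²)/(sinhc(2z/v) v)`. -/
noncomputable def hCR3 (z : ℝ) : ℝ × ℝ → ℝ := fun q =>
  -(((sinhc (2 * z / q.2)) ^ 2 * q.1 ^ 2 + q.2 ^ 2) / (sinhc (2 * z / q.2) * q.2))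

lemma sinhc_zero : sinhc 0 = 1 := by simp [sinhc]
lemma sinhc_of_ne (t : ℝ) (ht : t ≠ 0) : sinhc t = Real.sinh t / t := by simp [sinhc, ht]
lemma sinhc_ne_zero (t : ℝ) : sinhc t ≠ 0 := by
  rcases eq_or_ne t 0 with h | h
  · simp [h, sinhc_zero]
  · rw [sinhc_of_ne t h]
    exact div_ne_zero (by simpa [Real.sinh_eq_zero] using h) h
lemma sinhc_neg (t : ℝ) : sinhc (-t) = sinhc t := by
  rcases eq_or_ne t 0 with h | h
  · simp [h]
  · rw [sinhc_of_ne _ (neg_ne_zero.mpr h), sinhc_of_ne t h, Real.sinh_neg, neg_div_neg_eq]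

section key
open ContinuousLinearMap

lemma keyCalc (z : ℝ) (p : ℝ × ℝ) (hv : p.2 ≠ 0) (sv : ℝ)
    (hS : HasFDerivAt (fun q : ℝ × ℝ => sinhc (2 * z / q.2))
      (sv • ContinuousLinearMap.snd ℝ ℝ ℝ) p)
    (hcosh : sinhc (2 * z / p.2) - p.2 * sv = Real.cosh (2 * z / p.2)) :
      p.2 ^ 2 * pb hCR1 (hCR2 z) p = -(sinhc (2 * z * hCR1 p) * hCR1 p) ∧
      p.2 ^ 2 * pb hCR1 (hCR3 z) p = -(2 * hCR2 z p) ∧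
      p.2 ^ 2 * pb (hCR2 z) (hCR3 z) p = -(Real.cosh (2 * z * hCR1 p) * hCR3 z p) := by
  obtain ⟨u, v⟩ := p
  simp only at hv hcosh hS ⊢
  set s := sinhc (2 * z / v) with hs_def
  have hs : s ≠ 0 := sinhc_ne_zero _
  -- derivative of q ↦ (q.2)⁻¹
  have inv2 : HasFDerivAt (fun q : ℝ × ℝ => (q.2)⁻¹)
      ((-(v ^ 2)⁻¹) • ContinuousLinearMap.snd ℝ ℝ ℝ) (u, v) :=
    (hasDerivAt_inv hv).comp_hasFDerivAt (u, v) hasFDerivAt_snd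
  -- h1
  have e1 : hCR1 = fun q : ℝ × ℝ => -(q.2)⁻¹ := by
    funext q; simp [hCR1, one_div]
  have F1 : HasFDerivAt hCR1 (-((-(v ^ 2)⁻¹) • ContinuousLinearMap.snd ℝ ℝ ℝ)) (u, v) := by
    rw [e1]; exact inv2.neg
  -- h2
  have e2 : hCR2 z = fun q : ℝ × ℝ => -(sinhc (2 * z / q.2) * q.1 * (q.2)⁻¹) := by
    funext q; simp [hCR2, div_eq_mul_inv]
  have F2 : HasFDerivAt (hCR2 z) (-(((fun q : ℝ × ℝ => sinhc (2 * z / q.2) * q.1) (u, v)) •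
      ((-(v ^ 2)⁻¹) • ContinuousLinearMap.snd ℝ ℝ ℝ) + (v⁻¹) •
      (s • ContinuousLinearMap.fst ℝ ℝ ℝ + u • (sv • ContinuousLinearMap.snd ℝ ℝ ℝ)))) (u, v) := by
    rw [e2]; exact ((hS.mul hasFDerivAt_fst).mul inv2).neg
  -- h3
  have hsv : s * v ≠ 0 := mul_ne_zero hs hv
  have invden : HasFDerivAt (fun q : ℝ × ℝ => (sinhc (2 * z / q.2) * q.2)⁻¹)
      ((-((s * v) ^ 2)⁻¹) • (s • ContinuousLinearMap.snd ℝ ℝ ℝ +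
        v • (sv • ContinuousLinearMap.snd ℝ ℝ ℝ))) (u, v) :=
    (hasDerivAt_inv hsv).comp_hasFDerivAt (u, v) (hS.mul hasFDerivAt_snd)
  have num : HasFDerivAt (fun q : ℝ × ℝ => sinhc (2 * z / q.2) ^ 2 * q.1 ^ 2 + q.2 ^ 2)
      ((s ^ 2) • (u • ContinuousLinearMap.fst ℝ ℝ ℝ + u • ContinuousLinearMap.fst ℝ ℝ ℝ) +
        (u ^ 2) • (s • (sv • ContinuousLinearMap.snd ℝ ℝ ℝ) + s • (sv • ContinuousLinearMap.snd ℝ ℝ ℝ)) +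
        (v • ContinuousLinearMap.snd ℝ ℝ ℝ + v • ContinuousLinearMap.snd ℝ ℝ ℝ)) (u, v) := by
    have h1 : HasFDerivAt (fun q : ℝ × ℝ => sinhc (2 * z / q.2) ^ 2 * q.1 ^ 2)
        ((s ^ 2) • (u • ContinuousLinearMap.fst ℝ ℝ ℝ + u • ContinuousLinearMap.fst ℝ ℝ ℝ) +
          (u ^ 2) • (s • (sv • ContinuousLinearMap.snd ℝ ℝ ℝ) + s • (sv • ContinuousLinearMap.snd ℝ ℝ ℝ))) (u, v) := by
      have hS2 : HasFDerivAt (fun q : ℝ × ℝ => sinhc (2 * z / q.2) ^ 2)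
          (s • (sv • ContinuousLinearMap.snd ℝ ℝ ℝ) + s • (sv • ContinuousLinearMap.snd ℝ ℝ ℝ)) (u, v) := by
        have := hS.mul hS
        simpa [pow_two, Pi.mul_def] using this
      have hu2 : HasFDerivAt (fun q : ℝ × ℝ => q.1 ^ 2)
          (u • ContinuousLinearMap.fst ℝ ℝ ℝ + u • ContinuousLinearMap.fst ℝ ℝ ℝ) (u, v) := by
        have := (hasFDerivAt_fst (𝕜 := ℝ) (p := ((u, v) : ℝ × ℝ))).mul hasFDerivAt_fst
        simpa [pow_two, Pi.mul_def] using this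
      simpa [Pi.mul_def] using hS2.mul hu2
    have h2 : HasFDerivAt (fun q : ℝ × ℝ => q.2 ^ 2)
        (v • ContinuousLinearMap.snd ℝ ℝ ℝ + v • ContinuousLinearMap.snd ℝ ℝ ℝ) (u, v) := by
      have := (hasFDerivAt_snd (𝕜 := ℝ) (p := ((u, v) : ℝ × ℝ))).mul hasFDerivAt_snd
      simpa [pow_two, Pi.mul_def] using this
    exact h1.add h2
  have e3 : hCR3 z = fun q : ℝ × ℝ =>
      -((sinhc (2 * z / q.2) ^ 2 * q.1 ^ 2 + q.2 ^ 2) * (sinhc (2 * z / q.2) * q.2)⁻¹) := by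
    funext q; simp [hCR3, div_eq_mul_inv]
  have F3 := ((num.mul invden).neg)
  simp only [Pi.neg_def, Pi.mul_def] at F3
  rw [← e3] at F3
  -- evaluate
  rw [pb, pb, pb, F1.fderiv, F2.fderiv, F3.fderiv]
  simp only [ContinuousLinearMap.neg_apply, ContinuousLinearMap.add_apply,
    ContinuousLinearMap.smul_apply, ContinuousLinearMap.coe_fst', ContinuousLinearMap.coe_snd',
    smul_eq_mul, mul_zero, mul_one, add_zero, zero_add, neg_zero, neg_neg]
  simp only [hCR1, hCR2, hCR3, ← hs_def]
  rw [show 2 * z * -(1 / v) = -(2 * z / v) by ring, sinhc_neg, Real.cosh_neg, ← hcosh, ← hs_def]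
  clear F1 F2 F3 num invden inv2 hS e1 e2 e3 hsv hcosh
  clear_value s
  refine ⟨by field_simp; ring, by field_simp; ring, by field_simp; ring⟩
end key

lemma hasDerivAt_sinhc {t : ℝ} (ht : t ≠ 0) :
    HasDerivAt sinhc (Real.cosh t / t - Real.sinh t / t ^ 2) t := by
  have h1 : HasDerivAt (fun x => Real.sinh x / x)
      ((Real.cosh t * t - Real.sinh t * 1) / t ^ 2) t :=
    (Real.hasDerivAt_sinh t).div (hasDerivAt_id t) ht
  have h2 : (Real.cosh t * t - Real.sinh t * 1) / t ^ 2
      = Real.cosh t / t - Real.sinh t / t ^ 2 := by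
    field_simp
  rw [h2] at h1
  apply h1.congr_of_eventuallyEq
  filter_upwards [eventually_ne_nhds ht] with x hx
  simp [sinhc, hx]

/-- On `{v ≠ 0}` with the Poisson bracket
`{f,g} = v²(∂f/∂u ∂g/∂v − ∂f/∂v ∂g/∂u)` of `ω = du∧dv/v²`, the deformed
complex-Riccati Hamiltonians close the deformed sl(2) brackets. -/
theorem deformed_complexRiccati_brackets (z : ℝ) :
    ∀ p : ℝ × ℝ, p.2 ≠ 0 →
      p.2 ^ 2 * pb hCR1 (hCR2 z) p = -(sinhc (2 * z * hCR1 p) * hCR1 p) ∧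
      p.2 ^ 2 * pb hCR1 (hCR3 z) p = -(2 * hCR2 z p) ∧
      p.2 ^ 2 * pb (hCR2 z) (hCR3 z) p = -(Real.cosh (2 * z * hCR1 p) * hCR3 z p) := by
  intro p hv
  rcases eq_or_ne z 0 with hz | hz
  · subst hz
    apply keyCalc 0 p hv 0
    · have e : (fun q : ℝ × ℝ => sinhc (2 * 0 / q.2)) = fun _ => 1 := by
        funext q; simp [sinhc_zero]
      rw [e, zero_smul]
      exact hasFDerivAt_const 1 p
    · simp [sinhc_zero]
  · have ht : 2 * z / p.2 ≠ 0 := div_ne_zero (by positivity) hv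
    set t := 2 * z / p.2 with ht_def
    set sv : ℝ := (Real.cosh t / t - Real.sinh t / t ^ 2) * (2 * z) * (-(p.2 ^ 2)⁻¹) with hsv_def
    apply keyCalc z p hv sv
    · have hinner : HasFDerivAt (fun q : ℝ × ℝ => 2 * z / q.2)
          ((2 * z) • ((-(p.2 ^ 2)⁻¹) • ContinuousLinearMap.snd ℝ ℝ ℝ)) p := by
        have e : (fun q : ℝ × ℝ => 2 * z / q.2) = fun q : ℝ × ℝ => 2 * z * (q.2)⁻¹ := by
          funext q; rw [div_eq_mul_inv]
        rw [e]
        exact ((hasDerivAt_inv hv).comp_hasFDerivAt p hasFDerivAt_snd).const_mul (2 * z)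
      have := (hasDerivAt_sinhc ht).comp_hasFDerivAt p hinner
      rw [smul_smul, smul_smul] at this
      exact this
    · rw [sinhc_of_ne _ ht, hsv_def, ht_def]
      have h2z : (2 : ℝ) * z ≠ 0 := by positivity
      field_simp
      ring
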